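/- arXiv:1009.4427 — 3 statements merged into one kernel-verified Lean document; each statement's English description precedes it below -/
import Mathlib

section
/- Let S be a nonzero closed subspace of the vector-valued Hardy space H²(D) ⊗ E invariant under multiplication by z. Then there exist a Hilbert space E⋆ and an isometry U : H²(D) ⊗ E⋆ → H²(D) ⊗ E intertwining multiplication by z (U ∘ (M_z ⊗ I) = (M_z ⊗ I) ∘ U) whose range is exactly S. -/
/-!
For a closed `V`-invariant subspace `S`, the wandering subspace `W = S ⊖ V S` gives mutually
orthogonal subspaces `Vⁿ W` of `S`. Splitting `y ∈ S` as `w + V z` with `w ∈ W`, `z ∈ S`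
repeatedly shows that whatever in `S` is orthogonal to all of them lies in `⋂ₙ Vⁿ S`, which is `0`
for the unilateral shift since `Vⁿ y` vanishes in its first `n` coordinates. So
`f ↦ ∑ₙ Vⁿ (f n)` is an isometry `ℓ²(ℕ, W) → ℓ²(ℕ, E)` onto `S`, and it intertwines the shifts.
-/

open scoped InnerProductSpace ENNReal

noncomputable section

namespace lp

variable {𝕜 X : Type*} [NormedField 𝕜] [NormedAddCommGroup X] [NormedSpace 𝕜 X]

def IsUnilateralShift {p : ℝ≥0∞} (T : lp (fun _ : ℕ => X) p → lp (fun _ : ℕ => X) p) : Prop :=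
  ∀ f, T f 0 = 0 ∧ ∀ n, T f (n + 1) = f n

namespace IsUnilateralShift

variable {p : ℝ≥0∞} {T : lp (fun _ : ℕ => X) p → lp (fun _ : ℕ => X) p}

theorem iterate_apply_of_lt (hT : IsUnilateralShift T) {n j : ℕ} (hj : j < n)
    (y : lp (fun _ : ℕ => X) p) : (T^[n] y) j = 0 := by
  induction n generalizing j with
  | zero => omega
  | succ n ih =>
    rw [Function.iterate_succ_apply']
    cases j with
    | zero => exact (hT _).1
    | succ j => rw [(hT _).2 j]; exact ih (by omega)

theorem eq_zero_of_forall_mem_range_iterate (hT : IsUnilateralShift T)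
    {x : lp (fun _ : ℕ => X) p} (hx : ∀ n, ∃ y, x = T^[n] y) : x = 0 := by
  ext k
  obtain ⟨y, rfl⟩ := hx (k + 1)
  exact hT.iterate_apply_of_lt (Nat.lt_succ_self k) y

end IsUnilateralShift

def shiftFun (f : ℕ → X) : ℕ → X := fun n => Nat.casesOn n 0 f

theorem memℓp_shiftFun (f : lp (fun _ : ℕ => X) 2) : Memℓp (shiftFun ⇑f) 2 := by
  apply memℓp_gen
  rw [← summable_nat_add_iff 1]
  simpa [shiftFun] using (lp.memℓp f).summable (by norm_num)

theorem norm_mk_shiftFun (f : lp (fun _ : ℕ => X) 2) :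
    ‖(⟨shiftFun ⇑f, memℓp_shiftFun f⟩ : lp (fun _ : ℕ => X) 2)‖ = ‖f‖ := by
  have hp : 0 < (2 : ℝ≥0∞).toReal := by norm_num
  refine Real.rpow_left_injOn hp.ne' (norm_nonneg _) (norm_nonneg f) ?_
  dsimp only
  rw [lp.norm_rpow_eq_tsum hp, lp.norm_rpow_eq_tsum hp,
    ((lp.memℓp ⟨shiftFun ⇑f, memℓp_shiftFun f⟩).summable hp).tsum_eq_zero_add]
  simp [shiftFun]

def shift : lp (fun _ : ℕ => X) 2 →ₗᵢ[𝕜] lp (fun _ : ℕ => X) 2 where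
  toFun f := ⟨shiftFun ⇑f, memℓp_shiftFun f⟩
  map_add' f g := by
    ext n
    change shiftFun ⇑(f + g) n = shiftFun ⇑f n + shiftFun ⇑g n
    cases n <;> simp [shiftFun]
  map_smul' c f := by
    ext n
    change shiftFun ⇑(c • f) n = c • shiftFun ⇑f n
    cases n <;> simp [shiftFun]
  norm_map' := norm_mk_shiftFun

theorem isUnilateralShift_shift : IsUnilateralShift (shift (𝕜 := 𝕜) (X := X)) :=
  fun _ => ⟨rfl, fun _ => rfl⟩

end lp

namespace LinearIsometry

variable {𝕜 H : Type*} [RCLike 𝕜] [NormedAddCommGroup H] [InnerProductSpace 𝕜 H]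
  (V : H →ₗᵢ[𝕜] H) {S : Submodule 𝕜 H}

def wanderingSubspace (S : Submodule 𝕜 H) : Submodule 𝕜 H :=
  S ⊓ (S.map V.toLinearMap)ᗮ

theorem pow_succ_apply' (n : ℕ) (x : H) : (V ^ (n + 1)) x = V ((V ^ n) x) := by
  rw [pow_succ', coe_mul, Function.comp_apply]

theorem pow_apply_mem (hS : ∀ x ∈ S, V x ∈ S) (n : ℕ) {x : H} (hx : x ∈ S) : (V ^ n) x ∈ S := by
  induction n with
  | zero => exact hx
  | succ n ih => rw [pow_succ_apply']; exact hS _ ih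

theorem inner_map_eq_zero_of_mem_wanderingSubspace {w z : H} (hw : w ∈ V.wanderingSubspace S)
    (hz : z ∈ S) : ⟪w, V z⟫_𝕜 = 0 :=
  Submodule.inner_left_of_mem_orthogonal (Submodule.mem_map_of_mem hz) hw.2

theorem orthogonalFamily_wanderingSubspace (hS : ∀ x ∈ S, V x ∈ S) :
    OrthogonalFamily 𝕜 (fun _ : ℕ => V.wanderingSubspace S)
      (fun n => (V ^ n).comp (V.wanderingSubspace S).subtypeₗᵢ) := by
  have key : ∀ i k (v w : V.wanderingSubspace S), ⟪(V ^ i) v, (V ^ (i + k + 1)) w⟫_𝕜 = 0 := by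
    intro i k v w
    rw [add_assoc, pow_add, coe_mul, Function.comp_apply, inner_map_map, pow_succ_apply']
    exact V.inner_map_eq_zero_of_mem_wanderingSubspace v.2 (V.pow_apply_mem hS k w.2.1)
  intro i j hij v w
  rcases lt_or_gt_of_ne hij with h | h
  · obtain ⟨k, rfl⟩ := Nat.exists_eq_add_of_lt h
    exact key i k v w
  · obtain ⟨k, rfl⟩ := Nat.exists_eq_add_of_lt h
    rw [← inner_conj_symm]
    exact (congrArg _ (key j k w v)).trans (map_zero _)

theorem isClosed_wanderingSubspace (hSc : IsClosed (S : Set H)) :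
    IsClosed (V.wanderingSubspace S : Set H) :=
  hSc.inter (Submodule.isClosed_orthogonal _)

variable [CompleteSpace H]

theorem exists_eq_add_map_of_mem (hSc : IsClosed (S : Set H)) (hS : ∀ x ∈ S, V x ∈ S)
    {y : H} (hy : y ∈ S) : ∃ w ∈ V.wanderingSubspace S, ∃ z ∈ S, y = w + V z := by
  have : CompleteSpace (S.map V.toLinearMap) := by
    refine IsComplete.completeSpace_coe ?_
    rw [Submodule.map_coe]
    exact (isComplete_image_iff V).mpr hSc.isComplete
  obtain ⟨_, ⟨z, hz, rfl⟩, w, hw, hyw⟩ := (S.map V.toLinearMap).exists_add_mem_mem_orthogonal y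
  have hwS : w ∈ S := by
    rw [show w = y - V z by rw [hyw]; simp]
    exact S.sub_mem hy (hS z hz)
  exact ⟨w, ⟨hwS, hw⟩, z, hz, hyw.trans (add_comm _ _)⟩

theorem exists_eq_pow_apply_of_orthogonal (hSc : IsClosed (S : Set H)) (hS : ∀ x ∈ S, V x ∈ S)
    {x : H} (hx : x ∈ S) (hxW : ∀ n, ∀ w ∈ V.wanderingSubspace S, ⟪(V ^ n) w, x⟫_𝕜 = 0) (n : ℕ) :
    ∃ y ∈ S, x = (V ^ n) y := by
  induction n with
  | zero => exact ⟨x, hx, rfl⟩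
  | succ n ih =>
    obtain ⟨y, hyS, rfl⟩ := ih
    obtain ⟨w, hw, z, hz, rfl⟩ := V.exists_eq_add_map_of_mem hSc hS hyS
    have hw0 : w = 0 := by
      have := hxW n w hw
      rw [inner_map_map, inner_add_right, V.inner_map_eq_zero_of_mem_wanderingSubspace hw hz,
        add_zero] at this
      exact inner_self_eq_zero.mp this
    exact ⟨z, hz, by rw [hw0, zero_add, pow_succ, coe_mul, Function.comp_apply]⟩

theorem range_linearIsometry_wanderingSubspace (hSc : IsClosed (S : Set H))
    (hS : ∀ x ∈ S, V x ∈ S) (hpure : ∀ x, (∀ n, ∃ y, x = (V ^ n) y) → x = 0) :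
    LinearMap.range (V.orthogonalFamily_wanderingSubspace hS).linearIsometry.toLinearMap = S := by
  have := (V.isClosed_wanderingSubspace hSc).completeSpace_coe
  rw [OrthogonalFamily.range_linearIsometry]
  set M := (⨆ n, LinearMap.range ((V ^ n).comp (V.wanderingSubspace S).subtypeₗᵢ).toLinearMap)
    |>.topologicalClosure
  have hMS : M ≤ S := by
    refine Submodule.topologicalClosure_minimal _ (iSup_le fun n => ?_) hSc
    rintro _ ⟨w, rfl⟩
    exact V.pow_apply_mem hS n w.2.1
  refine le_antisymm hMS fun x hx => ?_
  have : CompleteSpace M := (Submodule.isClosed_topologicalClosure _).completeSpace_coe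
  obtain ⟨m, hm, m', hm', rfl⟩ := M.exists_add_mem_mem_orthogonal x
  have hm'S : m' ∈ S := by simpa using S.sub_mem hx (hMS hm)
  suffices m' = 0 by simpa [this] using hm
  have hM : ∀ n, ∀ w ∈ V.wanderingSubspace S, (V ^ n) w ∈ M := fun n w hw =>
    Submodule.le_topologicalClosure _ <| Submodule.mem_iSup_of_mem n <|
      LinearMap.mem_range_self _ (⟨w, hw⟩ : V.wanderingSubspace S)
  refine hpure m' fun n => ?_
  obtain ⟨y, -, hy⟩ := V.exists_eq_pow_apply_of_orthogonal hSc hS hm'S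
    (fun n w hw => Submodule.inner_right_of_mem_orthogonal (hM n w hw) hm') n
  exact ⟨y, hy⟩

end LinearIsometry

theorem OrthogonalFamily.linearIsometry_unilateralShift_apply {𝕜 G H : Type*} [RCLike 𝕜]
    [NormedAddCommGroup G] [InnerProductSpace 𝕜 G] [NormedAddCommGroup H]
    [InnerProductSpace 𝕜 H] [CompleteSpace H] {W : ℕ → G →ₗᵢ[𝕜] H}
    (hW : OrthogonalFamily 𝕜 (fun _ => G) W) {V : H →ₗᵢ[𝕜] H} (hWV : ∀ n g, W (n + 1) g = V (W n g))
    {T : lp (fun _ : ℕ => G) 2 → lp (fun _ : ℕ => G) 2} (hT : lp.IsUnilateralShift T)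
    (f : lp (fun _ : ℕ => G) 2) : hW.linearIsometry (T f) = V (hW.linearIsometry f) := by
  have hVf : HasSum (fun n => W (n + 1) (f n)) (V (hW.linearIsometry f)) := by
    simpa only [hWV, Function.comp_def] using (hW.hasSum_linearIsometry f).map V V.continuous
  refine (hW.hasSum_linearIsometry (T f)).unique ((hasSum_nat_add_iff' 1).mp ?_)
  simpa [(hT f).1, (hT f).2] using hVf

end

theorem stmt4_general {E : Type u} [NormedAddCommGroup E] [InnerProductSpace ℂ E] [CompleteSpace E]
    (SE : lp (fun _ : ℕ => E) 2 →ₗᵢ[ℂ] lp (fun _ : ℕ => E) 2)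
    (hSE : ∀ f : lp (fun _ : ℕ => E) 2, (SE f) 0 = 0 ∧ ∀ n : ℕ, (SE f) (n + 1) = f n)
    (S : Submodule ℂ (lp (fun _ : ℕ => E) 2))
    (hScl : IsClosed (S : Set (lp (fun _ : ℕ => E) 2)))
    (hSinv : ∀ x ∈ S, SE x ∈ S) :
    ∃ (Estar : Type u) (_ : NormedAddCommGroup Estar) (_ : InnerProductSpace ℂ Estar)
      (_ : CompleteSpace Estar)
      (SEstar : lp (fun _ : ℕ => Estar) 2 →ₗᵢ[ℂ] lp (fun _ : ℕ => Estar) 2)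
      (U : lp (fun _ : ℕ => Estar) 2 →ₗᵢ[ℂ] lp (fun _ : ℕ => E) 2),
      (∀ f : lp (fun _ : ℕ => Estar) 2, (SEstar f) 0 = 0 ∧ ∀ n : ℕ, (SEstar f) (n + 1) = f n) ∧
      (∀ f, U (SEstar f) = SE (U f)) ∧
      LinearMap.range U.toLinearMap = S := by
  have hU := SE.orthogonalFamily_wanderingSubspace hSinv
  have hSE_pure : ∀ x, (∀ n, ∃ y, x = (SE ^ n) y) → x = 0 := fun x hx =>
    lp.IsUnilateralShift.eq_zero_of_forall_mem_range_iterate hSE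
      fun n => by simpa only [LinearIsometry.coe_pow] using hx n
  refine ⟨SE.wanderingSubspace S, inferInstance, inferInstance,
    (SE.isClosed_wanderingSubspace hScl).completeSpace_coe, lp.shift, hU.linearIsometry,
    lp.isUnilateralShift_shift,
    hU.linearIsometry_unilateralShift_apply (fun n w => SE.pow_succ_apply' n w)
      lp.isUnilateralShift_shift,
    SE.range_linearIsometry_wanderingSubspace hScl hSinv hSE_pure⟩

/-- **Beurling–Lax–Halmos.** Model the vector-valued Hardy space `H²(𝔻) ⊗ E` as
`ℓ²(ℕ, E)` via Taylor coefficients, with module action the unilateral shift `SE`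
(characterized by `(SE f) 0 = 0` and `(SE f) (n+1) = f n`).  If `S` is a nonzero closed
shift-invariant subspace, then there are a Hilbert space `E⋆`, the shift `SEstar` on
`ℓ²(ℕ, E⋆)` (i.e. `H²(𝔻) ⊗ E⋆`), and an isometry `U : ℓ²(ℕ, E⋆) → ℓ²(ℕ, E)`
intertwining the shifts whose range is exactly `S`. -/
theorem stmt4 {E : Type u} [NormedAddCommGroup E] [InnerProductSpace ℂ E] [CompleteSpace E]
    (SE : lp (fun _ : ℕ => E) 2 →ₗᵢ[ℂ] lp (fun _ : ℕ => E) 2)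
    (hSE : ∀ f : lp (fun _ : ℕ => E) 2, (SE f) 0 = 0 ∧ ∀ n : ℕ, (SE f) (n + 1) = f n)
    (S : Submodule ℂ (lp (fun _ : ℕ => E) 2))
    (hScl : IsClosed (S : Set (lp (fun _ : ℕ => E) 2)))
    (hS0 : S ≠ ⊥)
    (hSinv : ∀ x ∈ S, SE x ∈ S) :
    ∃ (Estar : Type u) (_ : NormedAddCommGroup Estar) (_ : InnerProductSpace ℂ Estar)
      (_ : CompleteSpace Estar)
      (SEstar : lp (fun _ : ℕ => Estar) 2 →ₗᵢ[ℂ] lp (fun _ : ℕ => Estar) 2)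
      (U : lp (fun _ : ℕ => Estar) 2 →ₗᵢ[ℂ] lp (fun _ : ℕ => E) 2),
      (∀ f : lp (fun _ : ℕ => Estar) 2, (SEstar f) 0 = 0 ∧ ∀ n : ℕ, (SEstar f) (n + 1) = f n) ∧
      (∀ f, U (SEstar f) = SE (U f)) ∧
      LinearMap.range U.toLinearMap = S :=
  stmt4_general SE hSE S hScl hSinv
end

section
/- Let Λ = (λ_α)_{α ∈ ℕ^m} be weights with 0 < λ_α ≤ M, and define the multivariate weighted shifts M_i on ℓ²(ℕ^m) by M_i e_α = λ_α e_{α+δ_i}. Assume the shifts are strictly hyponormal: λ_{α+δ_i} > λ_α for all α and all i. If W : ℓ²(ℕ^m) → ℓ²(ℕ^m) is a unitary operator commuting with every M_i (i = 1,…,m) whose range is a closed subspace S invariant under all M_i, then S = ℓ²(ℕ^m); equivalently, no proper invariant subspace of ℓ²(ℕ^m) is isometrically isomorphic to ℓ²(ℕ^m) as a module over the shifts. -/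
/-!
Put `f = W e₀`, a unit vector. For every `i`, `‖Mᵢ f‖ = ‖W (Mᵢ e₀)‖ = λ₀`, while the coordinates of
`Mᵢ f` give `‖Mᵢ f‖² ≥ ∑ λ_γ² |f_γ|²`; since strict hyponormality makes `λ₀ < λ_γ` for every
`γ ≠ 0`, `f` must vanish off `0`, i.e. `W e₀ = c e₀` with `c ≠ 0`. Intertwining with the shifts
propagates this to `W e_α = c e_α` for all `α`, so the closed range of `W` contains every `e_α`.
-/

open scoped ENNReal

theorem Pi.induction_add_single {ι : Type*} [Finite ι] [DecidableEq ι] {P : (ι → ℕ) → Prop}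
    (zero : P 0) (add_single : ∀ α i, P α → P (α + Pi.single i 1)) (α : ι → ℕ) : P α := by
  induction α using WellFoundedLT.induction with
  | _ α ih =>
    obtain rfl | hα := eq_or_ne α 0
    · exact zero
    obtain ⟨i, hi⟩ := Function.ne_iff.mp hα
    rw [Pi.zero_apply] at hi
    have hα' : α - Pi.single i 1 + Pi.single i 1 = α := by
      ext k
      obtain rfl | hk := eq_or_ne k i
      · simp only [Pi.add_apply, Pi.sub_apply, Pi.single_eq_same]
        omega
      · simp [hk]
    rw [← hα']
    exact add_single _ i <| ih _ <| Pi.lt_def.mpr ⟨fun _ => tsub_le_self, i, by simp; omega⟩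

theorem apply_zero_lt_apply_of_ne_zero {ι β : Type*} [Finite ι] [DecidableEq ι] [Preorder β]
    {Λ : (ι → ℕ) → β} (hΛ : ∀ α i, Λ α < Λ (α + Pi.single i 1)) {γ : ι → ℕ} (hγ : γ ≠ 0) :
    Λ 0 < Λ γ := by
  induction γ using Pi.induction_add_single with
  | zero => exact absurd rfl hγ
  | add_single α i ih =>
    obtain rfl | hα := eq_or_ne α 0
    · exact hΛ 0 i
    · exact (ih hα).trans (hΛ α i)

theorem lp.hasSum_norm_sq {ι : Type*} {E : ι → Type*} [∀ i, NormedAddCommGroup (E i)]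
    (f : lp E 2) : HasSum (fun i => ‖f i‖ ^ 2) (‖f‖ ^ 2) := by
  simpa using lp.hasSum_norm (by norm_num) f

theorem lp.eq_single_of_apply_eq_zero {ι : Type*} [DecidableEq ι] {E : ι → Type*}
    [∀ i, NormedAddCommGroup (E i)] {p : ℝ≥0∞} {f : lp E p} {a : ι} (h : ∀ γ ≠ a, f γ = 0) :
    f = lp.single p a (f a) := by
  ext γ
  obtain rfl | hγ := eq_or_ne γ a
  · simp
  · simp [h γ hγ, Pi.single_eq_of_ne hγ]

theorem lp.eq_top_of_isClosed_of_single_mem {ι 𝕜 : Type*} [DecidableEq ι] [NormedField 𝕜]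
    {p : ℝ≥0∞} [Fact (1 ≤ p)] (hp : p ≠ ∞) {S : Submodule 𝕜 (lp (fun _ : ι => 𝕜) p)}
    (hS : IsClosed (S : Set (lp (fun _ : ι => 𝕜) p))) (h : ∀ α, lp.single p α (1 : 𝕜) ∈ S) :
    S = ⊤ := by
  refine eq_top_iff.mpr fun f _ => hS.mem_of_tendsto (lp.hasSum_single hp f)
    (.of_forall fun s => S.sum_mem fun α _ => ?_)
  rw [← mul_one (f α), ← smul_eq_mul, lp.single_smul]
  exact S.smul_mem _ (h α)

section WeightedShift

variable {ι 𝕜 : Type*} [DecidableEq ι] [NormedField 𝕜] {p : ℝ≥0∞} [Fact (1 ≤ p)]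

def IsWeightedShift (T : lp (fun _ : ι => 𝕜) p →L[𝕜] lp (fun _ : ι => 𝕜) p) (w : ι → 𝕜)
    (σ : ι → ι) : Prop :=
  ∀ α, T (lp.single p α 1) = w α • lp.single p (σ α) 1

namespace IsWeightedShift

variable {w : ι → 𝕜} {σ : ι → ι}

theorem apply_apply {T : lp (fun _ : ι => 𝕜) p →L[𝕜] lp (fun _ : ι => 𝕜) p}
    (hT : IsWeightedShift T w σ) (hσ : σ.Injective) (hp : p ≠ ∞)
    (f : lp (fun _ : ι => 𝕜) p) (γ : ι) : T f (σ γ) = w γ * f γ := by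
  have hsum := ((lp.evalCLM 𝕜 _ p (σ γ)).comp T).hasSum (lp.hasSum_single hp f)
  have hterm : ∀ β, (lp.evalCLM 𝕜 _ p (σ γ)).comp T (lp.single p β (f β))
      = if β = γ then w γ * f γ else 0 := by
    intro β
    rw [← mul_one (f β), ← smul_eq_mul, lp.single_smul, ContinuousLinearMap.comp_apply,
      map_smul, hT β]
    obtain rfl | hβ := eq_or_ne β γ
    · simp [lp.evalCLM, mul_comm]
    · simp [lp.evalCLM, hβ, hσ.ne hβ]
  rw [funext hterm] at hsum
  exact ((hasSum_ite_eq γ _).unique hsum).symm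

variable {T : lp (fun _ : ι => 𝕜) 2 →L[𝕜] lp (fun _ : ι => 𝕜) 2}

theorem summable_norm_mul_sq (hT : IsWeightedShift T w σ) (hσ : σ.Injective)
    (f : lp (fun _ : ι => 𝕜) 2) : Summable fun γ => ‖w γ * f γ‖ ^ 2 := by
  simpa [Function.comp_def, hT.apply_apply hσ (by simp)] using
    (lp.hasSum_norm_sq (T f)).summable.comp_injective hσ

theorem tsum_norm_mul_sq_le (hT : IsWeightedShift T w σ) (hσ : σ.Injective)
    (f : lp (fun _ : ι => 𝕜) 2) : ∑' γ, ‖w γ * f γ‖ ^ 2 ≤ ‖T f‖ ^ 2 := by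
  rw [← (lp.hasSum_norm_sq (T f)).tsum_eq]
  exact (hT.summable_norm_mul_sq hσ f).tsum_le_tsum_of_inj σ hσ (fun _ _ => by positivity)
    (fun γ => (hT.apply_apply hσ (by simp) f γ).symm ▸ le_rfl) (lp.hasSum_norm_sq (T f)).summable

theorem apply_eq_zero_of_norm_map_le (hT : IsWeightedShift T w σ) (hσ : σ.Injective) {a : ι}
    (hw : ∀ γ ≠ a, ‖w a‖ < ‖w γ‖) {f : lp (fun _ : ι => 𝕜) 2} (hf : ‖T f‖ ≤ ‖w a‖ * ‖f‖)
    {γ : ι} (hγ : γ ≠ a) : f γ = 0 := by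
  have hexcess : HasSum (fun β => ‖w β * f β‖ ^ 2 - ‖w a‖ ^ 2 * ‖f β‖ ^ 2)
      (∑' β, ‖w β * f β‖ ^ 2 - ‖w a‖ ^ 2 * ‖f‖ ^ 2) :=
    (hT.summable_norm_mul_sq hσ f).hasSum.sub ((lp.hasSum_norm_sq f).mul_left _)
  have hexcess_nonpos : ∑' β, ‖w β * f β‖ ^ 2 - ‖w a‖ ^ 2 * ‖f‖ ^ 2 ≤ 0 := by
    have hTf : ‖T f‖ ^ 2 ≤ ‖w a‖ ^ 2 * ‖f‖ ^ 2 := by rw [← mul_pow]; gcongr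
    linarith [hT.tsum_norm_mul_sq_le hσ f]
  have hterm_nonneg : ∀ β, 0 ≤ ‖w β * f β‖ ^ 2 - ‖w a‖ ^ 2 * ‖f β‖ ^ 2 := by
    intro β
    rw [norm_mul, mul_pow, sub_nonneg]
    obtain rfl | hβ := eq_or_ne β a
    · exact le_rfl
    · gcongr; exact (hw β hβ).le
  have hterm := (le_hasSum hexcess γ fun β _ => hterm_nonneg β).trans hexcess_nonpos
  rw [norm_mul, mul_pow, ← sub_mul] at hterm
  have hwγ : 0 < ‖w γ‖ ^ 2 - ‖w a‖ ^ 2 :=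
    sub_pos.mpr (pow_lt_pow_left₀ (hw γ hγ) (norm_nonneg _) two_ne_zero)
  simpa using nonpos_of_mul_nonpos_right hterm hwγ

end IsWeightedShift
end WeightedShift

theorem map_single_eq_smul_of_forall_commute {ι 𝕜 : Type*} [Fintype ι] [DecidableEq ι]
    [NormedField 𝕜] {p : ℝ≥0∞} [Fact (1 ≤ p)]
    {M : ι → lp (fun _ : ι → ℕ => 𝕜) p →L[𝕜] lp (fun _ : ι → ℕ => 𝕜) p} {Λ : (ι → ℕ) → 𝕜}
    (hM : ∀ i, IsWeightedShift (M i) Λ (· + Pi.single i 1)) (hΛ : ∀ α, Λ α ≠ 0)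
    {W : lp (fun _ : ι → ℕ => 𝕜) p →ₗ[𝕜] lp (fun _ : ι → ℕ => 𝕜) p}
    (hW : ∀ i f, W (M i f) = M i (W f)) {c : 𝕜}
    (h0 : W (lp.single p 0 1) = c • lp.single p 0 1) (α : ι → ℕ) :
    W (lp.single p α 1) = c • lp.single p α 1 := by
  induction α using Pi.induction_add_single with
  | zero => exact h0
  | add_single α i ih =>
    refine smul_right_injective _ (hΛ α) ?_
    calc Λ α • W (lp.single p (α + Pi.single i 1) 1)
        = M i (W (lp.single p α 1)) := by rw [← hW, hM i α, map_smul]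
      _ = Λ α • c • lp.single p (α + Pi.single i 1) 1 := by
        rw [ih, map_smul, hM i α, smul_comm]

theorem stmt6_general (m : ℕ) (Λ : (Fin m → ℕ) → ℝ)
    (hpos : ∀ α, 0 < Λ α)
    (hstrict : ∀ (α : Fin m → ℕ) (i : Fin m), Λ α < Λ (α + Pi.single i 1))
    (M : Fin m → (lp (fun _ : Fin m → ℕ => ℂ) 2 →L[ℂ] lp (fun _ : Fin m → ℕ => ℂ) 2))
    (hM : ∀ (i : Fin m) (α : Fin m → ℕ),
      M i (lp.single 2 α (1:ℂ)) = (Λ α : ℂ) • lp.single 2 (α + Pi.single i 1) (1:ℂ))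
    (W : lp (fun _ : Fin m → ℕ => ℂ) 2 →ₗᵢ[ℂ] lp (fun _ : Fin m → ℕ => ℂ) 2)
    (hW : ∀ (i : Fin m) (f : lp (fun _ : Fin m → ℕ => ℂ) 2), W (M i f) = M i (W f)) :
    LinearMap.range W.toLinearMap = ⊤ := by
  have hshift : ∀ i, IsWeightedShift (M i) (fun α => (Λ α : ℂ)) (· + Pi.single i 1) := hM
  have hnorm_single : ∀ α : Fin m → ℕ, ‖lp.single (E := fun _ => ℂ) 2 α 1‖ = 1 := fun α => by
    simp [lp.norm_single]
  set f := W (lp.single 2 0 1)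
  have hconc : ∀ β ≠ 0, f β = 0 := by
    intro β hβ
    obtain ⟨i, -⟩ := Function.ne_iff.mp hβ
    refine (hshift i).apply_eq_zero_of_norm_map_le (add_left_injective _) (fun γ hγ => ?_)
      ?_ hβ
    · simpa [abs_of_pos (hpos _)] using apply_zero_lt_apply_of_ne_zero hstrict hγ
    · rw [← hW, W.norm_map, W.norm_map, hM, norm_smul, hnorm_single, hnorm_single]
  have hf : f = f 0 • lp.single 2 0 1 := by
    rw [← lp.single_smul, smul_eq_mul, mul_one]
    exact lp.eq_single_of_apply_eq_zero hconc
  have hc : f 0 ≠ 0 := by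
    intro h
    have hnorm_f : ‖f‖ = 1 := by simp only [f, W.norm_map, hnorm_single]
    rw [hf, h, zero_smul, norm_zero] at hnorm_f
    exact zero_ne_one hnorm_f
  have hW_single := map_single_eq_smul_of_forall_commute hshift
    (fun α => Complex.ofReal_ne_zero.mpr (hpos α).ne') hW hf
  refine lp.eq_top_of_isClosed_of_single_mem (by simp) ?_ fun α =>
    ⟨(f 0)⁻¹ • lp.single 2 α 1, by simp [hW_single, inv_smul_smul₀ hc]⟩
  rw [LinearMap.coe_range, LinearIsometry.coe_toLinearMap]
  exact W.isometry.isClosedEmbedding.isClosed_range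

/-- Rigidity for strictly hyponormal multivariate weighted shifts.  Let
`Λ = (λ_α)_{α ∈ ℕ^m}` be weights with `0 < λ_α ≤ M₀` and `λ_α < λ_{α+δᵢ}` for all `α, i`
(strict hyponormality), and let `Mᵢ` be the corresponding weighted shifts on `ℓ²(ℕ^m)`,
determined by `Mᵢ e_α = λ_α e_{α+δᵢ}`.  If `W` is a unitary module map from `ℓ²(ℕ^m)` onto a
closed subspace `S = range W` (an isometry commuting with every `Mᵢ`, so `S` is invariant
under all `Mᵢ`), then `S = ℓ²(ℕ^m)`. -/
theorem stmt6 (m : ℕ) (M₀ : ℝ) (Λ : (Fin m → ℕ) → ℝ)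
    (hpos : ∀ α, 0 < Λ α) (hbd : ∀ α, Λ α ≤ M₀)
    (hstrict : ∀ (α : Fin m → ℕ) (i : Fin m), Λ α < Λ (α + Pi.single i 1))
    (M : Fin m → (lp (fun _ : Fin m → ℕ => ℂ) 2 →L[ℂ] lp (fun _ : Fin m → ℕ => ℂ) 2))
    (hM : ∀ (i : Fin m) (α : Fin m → ℕ),
      M i (lp.single 2 α (1:ℂ)) = (Λ α : ℂ) • lp.single 2 (α + Pi.single i 1) (1:ℂ))
    (W : lp (fun _ : Fin m → ℕ => ℂ) 2 →ₗᵢ[ℂ] lp (fun _ : Fin m → ℕ => ℂ) 2)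
    (hW : ∀ (i : Fin m) (f : lp (fun _ : Fin m → ℕ => ℂ) 2), W (M i f) = M i (W f)) :
    LinearMap.range W.toLinearMap = ⊤ :=
  stmt6_general m Λ hpos hstrict M hM W hW
end

section
/- Let f₁, f₂ ∈ L²ₐ(D) (Bergman space of the unit disk) and suppose W : [f₁] → [f₂] is a unitary module map between the cyclic invariant subspaces they generate (W intertwines multiplication by z and W f₁ = f₂ up to the cyclic structure: W(p·f₁) = p·f₂ for all polynomials p, and W is isometric). Then ∫_D |p(z)|²|f₁(z)|² dA(z) = ∫_D |p(z)|²|f₂(z)|² dA(z) for every polynomial p, and consequently |f₁(z)| = |f₂(z)| for all z ∈ D and Z(f₁) = Z(f₂). -/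
/-!
Since `W` is an isometry with `W (p f₁) = p f₂`, it preserves inner products, so the finite measures
`|f₁|² dA` and `|f₂|² dA` on the disc have the same complex moments `∫ z̄ᵐ zⁿ`. The star-algebra
generated by `z` separates the points of the closed disc, so by Stone–Weierstrass these moments
determine a compactly supported finite measure; hence the two measures agree. Their densities are
then equal almost everywhere, and being continuous on the open disc, everywhere on it.
-/

open MeasureTheory Metric Polynomial ComplexConjugate BoundedContinuousFunction

theorem StarAlgebra.adjoin_singleton_eq_span {R A : Type*} [CommSemiring R] [StarRing R]
    [CommSemiring A] [StarRing A] [Algebra R A] [StarModule R A] (a : A) :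
    Subalgebra.toSubmodule (StarAlgebra.adjoin R {a}).toSubalgebra =
      Submodule.span R {x | ∃ m n : ℕ, star a ^ m * a ^ n = x} := by
  rw [StarAlgebra.adjoin_toSubalgebra, Algebra.adjoin_eq_span, Set.star_singleton,
    Set.union_comm, Set.singleton_union]
  congr 1
  ext x
  exact Submonoid.mem_closure_pair _ _ _

theorem MeasureTheory.MemLp.inner_toLp_eq_integral {α 𝕜 E : Type*} [RCLike 𝕜]
    [NormedAddCommGroup E] [InnerProductSpace 𝕜 E] [MeasurableSpace α] {μ : Measure α}
    {f g : α → E} (hf : MemLp f 2 μ) (hg : MemLp g 2 μ) :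
    inner 𝕜 (hf.toLp f) (hg.toLp g) = ∫ a, inner 𝕜 (f a) (g a) ∂μ := by
  rw [L2.inner_def]
  refine integral_congr_ae ?_
  filter_upwards [hf.coeFn_toLp, hg.coeFn_toLp] with a hfa hga
  rw [hfa, hga]

section WithDensityEnormSq

variable {α E F : Type*} [MeasurableSpace α] {μ : Measure α} [NormedAddCommGroup E]
  [NormedSpace ℝ E] [NormedAddCommGroup F]

theorem integral_withDensity_enorm_sq {f : α → F} (hf : AEStronglyMeasurable f μ) (g : α → E) :
    ∫ x, g x ∂μ.withDensity (fun x => ‖f x‖ₑ ^ 2) = ∫ x, ‖f x‖ ^ 2 • g x ∂μ := by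
  rw [integral_withDensity_eq_integral_toReal_smul₀ (hf.enorm.pow_const 2)
    (ae_of_all _ fun x => ENNReal.pow_lt_top enorm_lt_top)]
  simp only [ENNReal.toReal_pow, toReal_enorm]

theorem MeasureTheory.MemLp.isFiniteMeasure_withDensity_enorm_sq {f : α → F}
    (hf : MemLp f 2 μ) : IsFiniteMeasure (μ.withDensity fun x => ‖f x‖ₑ ^ 2) := by
  refine isFiniteMeasure_withDensity ?_
  have := lintegral_rpow_enorm_lt_top_of_eLpNorm_lt_top two_ne_zero ENNReal.ofNat_ne_top
    hf.eLpNorm_lt_top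
  simpa using this.ne

theorem norm_eqOn_of_withDensity_enorm_sq_eq [TopologicalSpace α] [OpensMeasurableSpace α]
    [SigmaFinite μ] [μ.IsOpenPosMeasure] {U : Set α} (hU : IsOpen U) {f g : α → F}
    (hf : ContinuousOn f U) (hg : ContinuousOn g U)
    (h : (μ.restrict U).withDensity (fun x => ‖f x‖ₑ ^ 2)
      = (μ.restrict U).withDensity (fun x => ‖g x‖ₑ ^ 2)) :
    Set.EqOn (‖f ·‖) (‖g ·‖) U := by
  have hae : (fun x => ‖f x‖ₑ ^ 2) =ᵐ[μ.restrict U] fun x => ‖g x‖ₑ ^ 2 :=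
    (withDensity_eq_iff_of_sigmaFinite
      (((ENNReal.continuous_pow 2).comp_continuousOn hf.enorm).aemeasurable hU.measurableSet)
      (((ENNReal.continuous_pow 2).comp_continuousOn hg.enorm).aemeasurable hU.measurableSet)).mp h
  have hsq : Set.EqOn (fun x => ‖f x‖ ^ 2) (fun x => ‖g x‖ ^ 2) U := by
    refine Measure.eqOn_open_of_ae_eq (μ := μ) ?_ hU (hf.norm.pow 2) (hg.norm.pow 2)
    filter_upwards [hae] with x hx
    simpa using congrArg ENNReal.toReal hx
  intro x hx
  exact (pow_left_inj₀ (norm_nonneg _) (norm_nonneg _) two_ne_zero).mp (hsq hx)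

end WithDensityEnormSq

theorem integral_conj_pow_mul_pow_withDensity_enorm_sq {μ : Measure ℂ} {f : ℂ → ℂ}
    (hf : AEStronglyMeasurable f μ) (m n : ℕ) :
    ∫ z, conj z ^ m * z ^ n ∂μ.withDensity (fun z => ‖f z‖ₑ ^ 2)
      = ∫ z, inner ℂ (z ^ m * f z) (z ^ n * f z) ∂μ := by
  rw [integral_withDensity_enorm_sq hf]
  congr 1 with z
  simp only [RCLike.inner_apply, map_mul, map_pow, Complex.real_smul]
  push_cast
  linear_combination (-(conj z ^ m * z ^ n)) * Complex.conj_mul' (f z)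

theorem MeasureTheory.Measure.map_comap_subtype_val_of_ae_mem {α : Type*} [MeasurableSpace α]
    {s : Set α} (hs : MeasurableSet s) {μ : Measure α} (h : ∀ᵐ x ∂μ, x ∈ s) :
    (μ.comap ((↑) : s → α)).map (↑) = μ := by
  rw [map_comap_subtype_coe hs, Measure.restrict_eq_self_of_ae_mem h]

theorem MeasureTheory.Measure.ext_of_integral_conj_pow_mul_pow_eq {K : Set ℂ} (hK : IsCompact K)
    {μ ν : Measure ℂ} [IsFiniteMeasure μ] [IsFiniteMeasure ν]
    (hμ : ∀ᵐ z ∂μ, z ∈ K) (hν : ∀ᵐ z ∂ν, z ∈ K)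
    (h : ∀ m n : ℕ, ∫ z, conj z ^ m * z ^ n ∂μ = ∫ z, conj z ^ m * z ^ n ∂ν) : μ = ν := by
  have : CompactSpace K := isCompact_iff_compactSpace.mp hK
  have : CompleteSpace K := hK.isClosed.completeSpace_coe
  set Z : K →ᵇ ℂ := mkOfCompact ⟨Subtype.val, continuous_subtype_val⟩
  have hmoment : ∀ g ∈ StarAlgebra.adjoin ℂ {Z},
      ∫ x, g x ∂(μ.comap Subtype.val) = ∫ x, g x ∂(ν.comap Subtype.val) := by
    intro g hg
    replace hg : g ∈ Subalgebra.toSubmodule (StarAlgebra.adjoin ℂ {Z}).toSubalgebra := hg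
    rw [StarAlgebra.adjoin_singleton_eq_span] at hg
    induction hg using Submodule.span_induction with
    | mem g hg =>
      obtain ⟨m, n, rfl⟩ := hg
      have hZ : ⇑(star Z ^ m * Z ^ n) = fun x : K => conj (x : ℂ) ^ m * (x : ℂ) ^ n := by
        ext x
        simp [Z]
      simp only [hZ]
      rw [integral_subtype_comap hK.measurableSet (fun z => conj z ^ m * z ^ n),
        integral_subtype_comap hK.measurableSet (fun z => conj z ^ m * z ^ n),
        Measure.restrict_eq_self_of_ae_mem hμ, Measure.restrict_eq_self_of_ae_mem hν, h m n]
    | zero => simp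
    | add g₁ g₂ _ _ h₁ h₂ =>
      rw [BoundedContinuousFunction.coe_add]
      simp only [Pi.add_apply]
      rw [integral_add (g₁.integrable _) (g₂.integrable _),
        integral_add (g₁.integrable _) (g₂.integrable _), h₁, h₂]
    | smul c g _ hg =>
      rw [BoundedContinuousFunction.coe_smul]
      simp only [integral_smul, hg]
  have hsep : ((StarAlgebra.adjoin ℂ {Z}).map (toContinuousMapStarₐ ℂ)).SeparatesPoints := by
    intro x y hxy
    exact ⟨_, ⟨_, StarSubalgebra.mem_map.mpr ⟨Z, StarAlgebra.subset_adjoin ℂ {Z} rfl, rfl⟩, rfl⟩,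
      fun e => hxy (Subtype.ext e)⟩
  rw [← Measure.map_comap_subtype_val_of_ae_mem hK.measurableSet hμ,
    ← Measure.map_comap_subtype_val_of_ae_mem hK.measurableSet hν,
    ext_of_forall_mem_subalgebra_integral_eq_of_pseudoEMetric_complete_countable hsep hmoment]

/-- Let `f₁, f₂` be Bergman functions on the unit disk (holomorphic and, together with all
their polynomial multiples, in `L²` of area measure on the disk), and suppose
`W : [f₁] → L²ₐ(𝔻)` is an isometric module map on the cyclic submodule generated by `f₁`
with `W (p·f₁) = p·f₂` for all polynomials `p`.  Then `∫|p f₁|² = ∫|p f₂|²` for every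
polynomial `p`, `|f₁| = |f₂|` pointwise on the disk, and `Z(f₁) = Z(f₂)`. -/
theorem stmt9 (f₁ f₂ : ℂ → ℂ)
    (hd₁ : DifferentiableOn ℂ f₁ (ball (0:ℂ) 1))
    (hd₂ : DifferentiableOn ℂ f₂ (ball (0:ℂ) 1))
    (hm : ∀ p : Polynomial ℂ,
      MemLp (fun z => p.eval z * f₁ z) 2 (volume.restrict (ball (0:ℂ) 1)) ∧
      MemLp (fun z => p.eval z * f₂ z) 2 (volume.restrict (ball (0:ℂ) 1)))
    (W : ↥((Submodule.span ℂ {g : Lp ℂ 2 (volume.restrict (ball (0:ℂ) 1)) |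
        ∃ p : Polynomial ℂ, g = ((hm p).1).toLp _}).topologicalClosure)
      →ₗᵢ[ℂ] Lp ℂ 2 (volume.restrict (ball (0:ℂ) 1)))
    (hW : ∀ p : Polynomial ℂ,
      W ⟨((hm p).1).toLp _,
          Submodule.le_topologicalClosure _ (Submodule.subset_span ⟨p, rfl⟩)⟩
        = ((hm p).2).toLp _) :
    (∀ p : Polynomial ℂ, (∫ z in ball (0:ℂ) 1, ‖p.eval z * f₁ z‖ ^ 2)
        = ∫ z in ball (0:ℂ) 1, ‖p.eval z * f₂ z‖ ^ 2) ∧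
    (∀ z ∈ ball (0:ℂ) 1, ‖f₁ z‖ = ‖f₂ z‖) ∧
    {z ∈ ball (0:ℂ) 1 | f₁ z = 0} = {z ∈ ball (0:ℂ) 1 | f₂ z = 0} := by
  set ν₁ := (volume.restrict (ball (0:ℂ) 1)).withDensity fun z => ‖f₁ z‖ₑ ^ 2
  set ν₂ := (volume.restrict (ball (0:ℂ) 1)).withDensity fun z => ‖f₂ z‖ₑ ^ 2
  have hf₁ := hd₁.continuousOn.aestronglyMeasurable (μ := volume) measurableSet_ball
  have hf₂ := hd₂.continuousOn.aestronglyMeasurable (μ := volume) measurableSet_ball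
  have : IsFiniteMeasure ν₁ := by
    simpa using MemLp.isFiniteMeasure_withDensity_enorm_sq (hm 1).1
  have : IsFiniteMeasure ν₂ := by
    simpa using MemLp.isFiniteMeasure_withDensity_enorm_sq (hm 1).2
  have hsupp : ∀ f : ℂ → ℂ, ∀ᵐ z ∂(volume.restrict (ball (0:ℂ) 1)).withDensity
      (fun z => ‖f z‖ₑ ^ 2), z ∈ closedBall (0:ℂ) 1 := fun f =>
    (withDensity_absolutelyContinuous _ _).ae_le
      ((ae_restrict_mem measurableSet_ball).mono fun z hz => ball_subset_closedBall hz)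
  have hν : ν₁ = ν₂ := by
    refine Measure.ext_of_integral_conj_pow_mul_pow_eq (isCompact_closedBall 0 1)
      (hsupp f₁) (hsupp f₂) fun m n => ?_
    have hWinner := W.inner_map_map ⟨_, Submodule.le_topologicalClosure _
      (Submodule.subset_span ⟨X ^ m, rfl⟩)⟩ ⟨_, Submodule.le_topologicalClosure _
      (Submodule.subset_span ⟨X ^ n, rfl⟩)⟩
    rw [hW, hW, Submodule.coe_inner, MemLp.inner_toLp_eq_integral,
      MemLp.inner_toLp_eq_integral] at hWinner
    rw [integral_conj_pow_mul_pow_withDensity_enorm_sq hf₁,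
      integral_conj_pow_mul_pow_withDensity_enorm_sq hf₂]
    simpa only [eval_pow, eval_X] using hWinner.symm
  have hnorm : ∀ z ∈ ball (0:ℂ) 1, ‖f₁ z‖ = ‖f₂ z‖ :=
    norm_eqOn_of_withDensity_enorm_sq_eq isOpen_ball hd₁.continuousOn hd₂.continuousOn hν
  refine ⟨fun p => ?_, hnorm, ?_⟩
  · have := congrArg (fun ν => ∫ z, ‖p.eval z‖ ^ 2 ∂ν) hν
    rw [integral_withDensity_enorm_sq hf₁, integral_withDensity_enorm_sq hf₂] at this
    simpa only [norm_mul, mul_pow, smul_eq_mul, mul_comm] using this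
  · ext z
    simp only [Set.mem_ofPred_eq]
    exact and_congr_right fun hz => by rw [← norm_eq_zero, hnorm z hz, norm_eq_zero]
end
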